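/- arXiv:2103.14435 — 7 statements merged into one kernel-verified Lean document; each statement's English description precedes it below -/
import Mathlib

section
/- Let Var be a type, I a finite index type, and C : I → Fin 3 → Var × Bool a family of 3-clauses. If there exists f : Var × Bool → Bool such that f (x, true) ≠ f (x, false) for every x ∈ Var, and for every i ∈ I the three values f (C i 0), f (C i 1), f (C i 2) are not all equal, then the assignment α : Var → Bool defined by α x = f (x, true) NAE-satisfies every clause: for every i ∈ I there exist positions j, j' ∈ Fin 3 with α (C i j).1 = (C i j).2 and α (C i j').1 ≠ (C i j').2. -/
/-- NAE-3SAT backward direction: from a labeling `f` of literals that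
disagrees on the two polarities of each variable and is not constant on any
clause, the assignment `α x = f (x, true)` NAE-satisfies every clause. -/
theorem stmt_1 {Var I : Type*} [Finite I] (C : I → Fin 3 → Var × Bool)
    (f : Var × Bool → Bool)
    (hf : ∀ x : Var, f (x, true) ≠ f (x, false))
    (hnae : ∀ i : I, ¬ (f (C i 0) = f (C i 1) ∧ f (C i 1) = f (C i 2))) :
    ∀ i : I,
      (∃ j : Fin 3, (fun x => f (x, true)) (C i j).1 = (C i j).2) ∧
      (∃ j' : Fin 3, (fun x => f (x, true)) (C i j').1 ≠ (C i j').2) := by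
  have key : ∀ p : Var × Bool, (f (p.1, true) = p.2) ↔ f p = true := by
    rintro ⟨x, a⟩
    have := hf x
    cases a <;> cases h1 : f (x, true) <;> cases h2 : f (x, false) <;> simp_all
  intro i
  have h := hnae i
  have htrue : ∃ j : Fin 3, f (C i j) = true := by
    by_contra hc
    push_neg at hc
    simp only [Bool.not_eq_true] at hc
    exact h ⟨(hc 0).trans (hc 1).symm, (hc 1).trans (hc 2).symm⟩
  have hfalse : ∃ j : Fin 3, f (C i j) = false := by
    by_contra hc
    push_neg at hc
    simp only [Bool.not_eq_false] at hc
    exact h ⟨(hc 0).trans (hc 1).symm, (hc 1).trans (hc 2).symm⟩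
  obtain ⟨j, hj⟩ := htrue
  obtain ⟨j', hj'⟩ := hfalse
  refine ⟨⟨j, (key (C i j)).mpr hj⟩, ⟨j', ?_⟩⟩
  simp only []
  intro hc
  rw [(key (C i j')).mp hc] at hj'
  exact absurd hj' (by simp)
end

section
/- Let Var and Cls be types and R₁ a finite set of triples in Var × Bool × Cls such that (a) every clause C occurring in R₁ occurs in exactly three distinct triples of R₁, and (b) every variable occurring in R₁ occurs in at least one triple with polarity true and in at least one triple with polarity false. Then there exists fk : Var × Bool × Cls → Bool satisfying DC₁ and DC₂ on R₁ if and only if there exists α : Var → Bool that NAE-satisfies R₁. -/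
/-- Correctness of the reduction from NAE-3SAT to C-Extension: there is an
FK assignment satisfying DC₁ and DC₂ on `R₁` iff there is an assignment
`α` that NAE-satisfies `R₁`. -/
theorem stmt_2 {Var Cls : Type*} [DecidableEq Var] [DecidableEq Cls]
    (R₁ : Finset (Var × Bool × Cls))
    -- (a) every clause occurring in R₁ occurs in exactly three distinct triples
    (ha : ∀ t ∈ R₁, (R₁.filter (fun s => s.2.2 = t.2.2)).card = 3)
    -- (b) every variable occurring in R₁ occurs with polarity true and with polarity false
    (hb : ∀ t ∈ R₁, (∃ C : Cls, (t.1, true, C) ∈ R₁) ∧ (∃ C : Cls, (t.1, false, C) ∈ R₁)) :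
    (∃ fk : Var × Bool × Cls → Bool,
      -- DC₁
      (¬ ∃ t₁ ∈ R₁, ∃ t₂ ∈ R₁,
        t₁.1 = t₂.1 ∧ t₁.2.1 ≠ t₂.2.1 ∧ fk t₁ = fk t₂) ∧
      -- DC₂
      (¬ ∃ t₁ ∈ R₁, ∃ t₂ ∈ R₁, ∃ t₃ ∈ R₁,
        t₁ ≠ t₂ ∧ t₁ ≠ t₃ ∧ t₂ ≠ t₃ ∧
        t₁.2.2 = t₂.2.2 ∧ t₂.2.2 = t₃.2.2 ∧
        fk t₁ = fk t₂ ∧ fk t₂ = fk t₃)) ↔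
    (∃ α : Var → Bool, ∀ t ∈ R₁,
      (∃ s ∈ R₁, s.2.2 = t.2.2 ∧ α s.1 = s.2.1) ∧
      (∃ s ∈ R₁, s.2.2 = t.2.2 ∧ α s.1 ≠ s.2.1)) := by
  classical
  constructor
  · rintro ⟨fk, hdc1, hdc2⟩
    have hd : ∀ x C₁ C₂, (x, true, C₁) ∈ R₁ → (x, false, C₂) ∈ R₁ →
        fk (x, true, C₁) ≠ fk (x, false, C₂) := by
      intro x C₁ C₂ h1 h2 heq
      exact hdc1 ⟨_, h1, _, h2, rfl, by simp, heq⟩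
    have hpt : ∀ x : Var, ∃ b : Bool, ∀ a C, (x, a, C) ∈ R₁ →
        (b = a ↔ fk (x, a, C) = true) := by
      intro x
      by_cases hx : ∃ a C, (x, a, C) ∈ R₁
      · obtain ⟨a0, C0, h0⟩ := hx
        obtain ⟨⟨Ct, hCt⟩, ⟨Cf, hCf⟩⟩ := hb (x, a0, C0) h0
        refine ⟨fk (x, true, Ct), fun a C hC => ?_⟩
        cases a with
        | false =>
          have h1 := hd x Ct C hCt hC
          revert h1
          cases hb1 : fk (x, true, Ct) <;> cases hb2 : fk (x, false, C) <;> simp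
        | true =>
          have h1 := hd x Ct Cf hCt hCf
          have h2 := hd x C Cf hC hCf
          revert h1 h2
          cases hb1 : fk (x, true, Ct) <;> cases hb2 : fk (x, true, C) <;>
            cases hb3 : fk (x, false, Cf) <;> simp
      · exact ⟨false, fun a C hC => absurd ⟨a, C, hC⟩ hx⟩
    choose α hkey using hpt
    have key : ∀ t ∈ R₁, (α t.1 = t.2.1 ↔ fk t = true) := by
      rintro ⟨x, a, C⟩ ht
      exact hkey x a C ht
    refine ⟨α, fun t ht => ?_⟩
    have hcard := ha t ht
    obtain ⟨u, v, w, huv, huw, hvw, hset⟩ := Finset.card_eq_three.mp hcard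
    have hu : u ∈ R₁ ∧ u.2.2 = t.2.2 := by
      have : u ∈ R₁.filter (fun s => s.2.2 = t.2.2) := by rw [hset]; simp
      simpa using Finset.mem_filter.mp this
    have hv : v ∈ R₁ ∧ v.2.2 = t.2.2 := by
      have : v ∈ R₁.filter (fun s => s.2.2 = t.2.2) := by rw [hset]; simp
      simpa using Finset.mem_filter.mp this
    have hw : w ∈ R₁ ∧ w.2.2 = t.2.2 := by
      have : w ∈ R₁.filter (fun s => s.2.2 = t.2.2) := by rw [hset]; simp
      simpa using Finset.mem_filter.mp this
    have hcontra : ¬ (fk u = fk v ∧ fk v = fk w) := by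
      rintro ⟨h1, h2⟩
      exact hdc2 ⟨u, hu.1, v, hv.1, w, hw.1, huv, huw, hvw,
        hu.2.trans hv.2.symm, hv.2.trans hw.2.symm, h1, h2⟩
    have htrue : ∃ s, (s ∈ R₁ ∧ s.2.2 = t.2.2) ∧ fk s = true := by
      cases h1 : fk u
      · cases h2 : fk v
        · cases h3 : fk w
          · exact absurd ⟨h1.trans h2.symm, h2.trans h3.symm⟩ hcontra
          · exact ⟨w, hw, h3⟩
        · exact ⟨v, hv, h2⟩
      · exact ⟨u, hu, h1⟩
    have hfalse : ∃ s, (s ∈ R₁ ∧ s.2.2 = t.2.2) ∧ fk s = false := by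
      cases h1 : fk u
      · exact ⟨u, hu, h1⟩
      · cases h2 : fk v
        · exact ⟨v, hv, h2⟩
        · cases h3 : fk w
          · exact ⟨w, hw, h3⟩
          · exact absurd ⟨h1.trans h2.symm, h2.trans h3.symm⟩ hcontra
    obtain ⟨s, ⟨hs, hsc⟩, hst⟩ := htrue
    obtain ⟨s', ⟨hs', hsc'⟩, hsf⟩ := hfalse
    refine ⟨⟨s, hs, hsc, (key s hs).mpr hst⟩, ⟨s', hs', hsc', ?_⟩⟩
    intro hcon
    have := (key s' hs').mp hcon
    simp [hsf] at this
  · rintro ⟨α, hα⟩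
    refine ⟨fun t => α t.1 == t.2.1, ?_, ?_⟩
    · rintro ⟨t₁, h1, t₂, h2, hv, hp, hfk⟩
      simp only at hfk
      rw [hv] at hfk
      revert hp hfk
      cases hb1 : t₁.2.1 <;> cases hb2 : t₂.2.1 <;>
        cases hb3 : α t₂.1 <;> simp
    · rintro ⟨t₁, h1, t₂, h2, t₃, h3, h12, h13, h23, hc12, hc23, hf12, hf23⟩
      have hcard := ha t₁ h1
      have hsub : ({t₁, t₂, t₃} : Finset _) ⊆ R₁.filter (fun s => s.2.2 = t₁.2.2) := by
        intro s hs
        simp only [Finset.mem_insert, Finset.mem_singleton] at hs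
        rcases hs with rfl | rfl | rfl
        · simp [Finset.mem_filter, h1]
        · simp [Finset.mem_filter, h2, hc12.symm]
        · simp [Finset.mem_filter, h3, (hc12.trans hc23).symm]
      have hc3 : ({t₁, t₂, t₃} : Finset _).card = 3 := by
        rw [Finset.card_insert_of_notMem (by simp [h12, h13]),
            Finset.card_insert_of_notMem (by simp [h23]), Finset.card_singleton]
      have heq : ({t₁, t₂, t₃} : Finset _) = R₁.filter (fun s => s.2.2 = t₁.2.2) :=
        Finset.eq_of_subset_of_card_le hsub (by rw [hcard, hc3])
      obtain ⟨⟨s, hs, hsc, hst⟩, ⟨s', hs', hsc', hsf⟩⟩ := hα t₁ h1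
      have hmem : s ∈ ({t₁, t₂, t₃} : Finset _) := by
        rw [heq]; exact Finset.mem_filter.mpr ⟨hs, hsc⟩
      have hmem' : s' ∈ ({t₁, t₂, t₃} : Finset _) := by
        rw [heq]; exact Finset.mem_filter.mpr ⟨hs', hsc'⟩
      have hfks : (α s.1 == s.2.1) = (α t₁.1 == t₁.2.1) := by
        simp only [Finset.mem_insert, Finset.mem_singleton] at hmem
        rcases hmem with rfl | rfl | rfl
        · rfl
        · exact hf12.symm
        · exact (hf12.trans hf23).symm
      have hfks' : (α s'.1 == s'.2.1) = (α t₁.1 == t₁.2.1) := by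
        simp only [Finset.mem_insert, Finset.mem_singleton] at hmem'
        rcases hmem' with rfl | rfl | rfl
        · rfl
        · exact hf12.symm
        · exact (hf12.trans hf23).symm
      have : (α s.1 == s.2.1) = (α s'.1 == s'.2.1) := hfks.trans hfks'.symm
      simp [hst] at this
      exact hsf this
end

section
/- Let U and V be types, n ∈ ℕ, and for each i ∈ Fin n a cardinality constraint (S i, B i, k i) with S i : Finset U, B i : Finset V nonempty, and k i ∈ ℕ. Assume the constraints are pairwise disjoint: for all i ≠ j, either S i ∩ S j = ∅, or S i = S j and B i ∩ B j = ∅. Assume further there is a value v₀ ∈ V with v₀ ∉ B i for every i. Then there exists an assignment g : U → V satisfying every constraint (i.e., for each i the number of x ∈ S i with g x ∈ B i equals k i) if and only if for every i, the sum of k j over all indices j with S j = S i is at most the cardinality of S i. -/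
/-!
Necessity: constraints with the same selection `S i` have disjoint value sets, so the tuples
they count are disjoint subsets of `S i`. Sufficiency: carve out of each selection disjoint
subsets `T j` of sizes `k j`, one per constraint on it, and send `T j` into `B j` and every
other tuple to `v₀`. Different selections are disjoint, so the `T j` are globally disjoint, and
since `v₀` lies in no `B i` and the `B j` on a common selection are disjoint, constraint `i`
counts exactly `T i`.
-/

open Finset Function

theorem Finset.exists_pairwiseDisjoint_subsets_card_eq {ι α : Type*} [DecidableEq ι]
    [DecidableEq α] (J : Finset ι) (A : Finset α) (k : ι → ℕ) (hk : ∑ j ∈ J, k j ≤ #A) :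
    ∃ T : ι → Finset α, (∀ j ∈ J, T j ⊆ A ∧ #(T j) = k j) ∧ (J : Set ι).PairwiseDisjoint T := by
  induction J using Finset.induction_on generalizing A with
  | empty => exact ⟨fun _ => ∅, by simp, by simp⟩
  | @insert j J hj ih =>
    rw [sum_insert hj] at hk
    obtain ⟨Aj, hAj, hAj_card⟩ := exists_subset_card_eq (le_of_add_le_left hk)
    obtain ⟨T, hT, hT_disj⟩ := ih (A \ Aj) (by rw [card_sdiff_of_subset hAj]; omega)
    have hT_eq : ∀ i ∈ J, update T j Aj i = T i := fun i hi =>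
      update_of_ne (ne_of_mem_of_not_mem hi hj) _ _
    refine ⟨update T j Aj, ?_, ?_⟩
    · simp only [mem_insert, forall_eq_or_imp, update_self]
      refine ⟨⟨hAj, hAj_card⟩, fun i hi => ?_⟩
      rw [hT_eq i hi]
      exact ⟨(hT i hi).1.trans sdiff_subset, (hT i hi).2⟩
    · rw [coe_insert, Set.pairwiseDisjoint_insert_of_notMem (mem_coe.not.2 hj)]
      refine ⟨hT_disj.mono_on fun i hi => (hT_eq i hi).le, fun i hi => ?_⟩
      rw [update_self, hT_eq i hi]
      exact disjoint_of_subset_right (hT i hi).1 disjoint_sdiff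

theorem Finset.sum_card_le_card_of_pairwiseDisjoint {ι α : Type*} [DecidableEq α] {J : Finset ι}
    {A : Finset α} {t : ι → Finset α} (ht : ∀ j ∈ J, t j ⊆ A)
    (h : (J : Set ι).PairwiseDisjoint t) : ∑ j ∈ J, #(t j) ≤ #A :=
  card_biUnion h ▸ card_le_card (biUnion_subset.2 ht)

theorem exists_pairwise_disjoint_subsets_card_eq {ι α : Type*} [Fintype ι] [DecidableEq ι]
    [DecidableEq α] (S : ι → Finset α) (k : ι → ℕ)
    (hS : ∀ i j, S i ≠ S j → Disjoint (S i) (S j))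
    (hk : ∀ i, ∑ j with S j = S i, k j ≤ #(S i)) :
    ∃ T : ι → Finset α, (∀ j, T j ⊆ S j ∧ #(T j) = k j) ∧ Pairwise (Disjoint on T) := by
  have hk' (A : Finset α) : ∑ j with S j = A, k j ≤ #A := by
    by_cases hA : ∃ i, S i = A
    · obtain ⟨i, rfl⟩ := hA
      exact hk i
    · simp [filter_false_of_mem fun j _ => not_exists.1 hA j]
  -- One family per selection `A`, shared by all indices `j` with `S j = A`.
  choose T hT hT_disj using fun A => exists_pairwiseDisjoint_subsets_card_eq _ A k (hk' A)
  refine ⟨fun j => T (S j) j, fun j => hT (S j) j (by simp), fun i j hij => ?_⟩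
  by_cases hSij : S i = S j
  · simp only [onFun, hSij]
    exact hT_disj (S j) (by simp [hSij]) (by simp) hij
  · exact (hS i j hSij).mono (hT (S i) i (by simp)).1 (hT (S j) j (by simp)).1

theorem exists_eq_on_pairwise_disjoint {ι α β : Type*} (T : ι → Finset α)
    (hT : Pairwise (Disjoint on T)) (b : ι → β) (v₀ : β) :
    ∃ g : α → β, (∀ j, ∀ x ∈ T j, g x = b j) ∧ ∀ x, (∃ j, x ∈ T j) ∨ g x = v₀ := by
  classical
  refine ⟨fun x => if h : ∃ j, x ∈ T j then b h.choose else v₀, fun j x hx => ?_, fun x => ?_⟩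
  · have h : ∃ j, x ∈ T j := ⟨j, hx⟩
    simp only [dif_pos h]
    rw [hT.eq (not_disjoint_iff.2 ⟨x, h.choose_spec, hx⟩)]
  · by_cases h : ∃ j, x ∈ T j
    · exact Or.inl h
    · exact Or.inr (dif_neg h)

section Constraints

variable {ι U V : Type*} [DecidableEq U] [DecidableEq V] (S : ι → Finset U) (B : ι → Finset V)
  (k : ι → ℕ)

theorem sum_le_card_of_card_filter_eq [Fintype ι]
    (hdisj : ∀ i j, i ≠ j → S i ∩ S j = ∅ ∨ (S i = S j ∧ B i ∩ B j = ∅)) (g : U → V)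
    (hg : ∀ i, #{x ∈ S i | g x ∈ B i} = k i) (i : ι) :
    ∑ j with S j = S i, k j ≤ #(S i) := by
  calc ∑ j with S j = S i, k j = ∑ j with S j = S i, #{x ∈ S i | g x ∈ B j} :=
        sum_congr rfl fun j hj => by rw [← hg j, (mem_filter.1 hj).2]
    _ ≤ #(S i) := by
      refine sum_card_le_card_of_pairwiseDisjoint (fun _ _ => filter_subset _ _)
        fun j hj j' hj' hjj' => disjoint_filter.2 fun x hx hxj hxj' => ?_
      rcases hdisj j j' hjj' with hS | ⟨-, hB⟩
      · rw [(mem_filter.1 hj).2, (mem_filter.1 hj').2, inter_self] at hS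
        simp [hS] at hx
      · exact notMem_empty _ (hB ▸ mem_inter.2 ⟨hxj, hxj'⟩)

theorem exists_card_filter_eq_of_sum_le [Fintype ι] [DecidableEq ι] (hB : ∀ i, (B i).Nonempty)
    (hdisj : ∀ i j, i ≠ j → S i ∩ S j = ∅ ∨ (S i = S j ∧ B i ∩ B j = ∅))
    (v₀ : V) (hv₀ : ∀ i, v₀ ∉ B i) (hk : ∀ i, ∑ j with S j = S i, k j ≤ #(S i)) :
    ∃ g : U → V, ∀ i, #{x ∈ S i | g x ∈ B i} = k i := by
  have hS (i j : ι) (hSij : S i ≠ S j) : Disjoint (S i) (S j) :=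
    disjoint_iff_inter_eq_empty.2 <|
      ((hdisj i j (ne_of_apply_ne S hSij)).resolve_right fun h => hSij h.1)
  obtain ⟨T, hT, hT_disj⟩ := exists_pairwise_disjoint_subsets_card_eq S k hS hk
  choose b hb using hB
  obtain ⟨g, hg_T, hg_v₀⟩ := exists_eq_on_pairwise_disjoint T hT_disj b v₀
  refine ⟨g, fun i => ?_⟩
  suffices {x ∈ S i | g x ∈ B i} = T i by rw [this, (hT i).2]
  ext x
  rw [mem_filter]
  refine ⟨fun ⟨hxS, hxB⟩ => ?_, fun hxT => ⟨(hT i).1 hxT, hg_T i x hxT ▸ hb i⟩⟩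
  obtain ⟨j, hxT⟩ | hx := hg_v₀ x
  · obtain rfl | hji := eq_or_ne j i
    · exact hxT
    rw [hg_T j x hxT] at hxB
    rcases hdisj j i hji with hS | ⟨-, hB⟩
    · exact absurd (hS ▸ mem_inter.2 ⟨(hT j).1 hxT, hxS⟩) (notMem_empty x)
    · exact absurd (hB ▸ mem_inter.2 ⟨hb j, hxB⟩) (notMem_empty _)
  · exact absurd (hx ▸ hxB) (hv₀ i)

end Constraints

/-- Satisfiability of a pairwise-disjoint set of cardinality constraints:
a satisfying assignment exists iff, for each constraint, the total target of
constraints with the same selection fits in that selection. -/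
theorem stmt_5 {U V : Type*} [DecidableEq U] [DecidableEq V] (n : ℕ)
    (S : Fin n → Finset U) (B : Fin n → Finset V) (k : Fin n → ℕ)
    (hB : ∀ i, (B i).Nonempty)
    (hdisj : ∀ i j, i ≠ j → S i ∩ S j = ∅ ∨ (S i = S j ∧ B i ∩ B j = ∅))
    (v₀ : V) (hv₀ : ∀ i, v₀ ∉ B i) :
    (∃ g : U → V, ∀ i, ((S i).filter (fun x => g x ∈ B i)).card = k i) ↔
      ∀ i, (∑ j ∈ Finset.univ.filter (fun j => S j = S i), k j) ≤ (S i).card :=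
  ⟨fun ⟨g, hg⟩ => sum_le_card_of_card_filter_eq S B k hdisj g hg,
    exists_card_filter_eq_of_sum_le S B k hB hdisj v₀ hv₀⟩
end

section
/- Let U and V be types, n ∈ ℕ, and for each i ∈ Fin n a cardinality constraint (S i, B i, k i) with S i : Finset U, B i : Finset V nonempty, and k i ∈ ℕ. Assume the sets S i are pairwise disjoint, and that there is a value v₀ ∈ V with v₀ ∉ B i for every i. Then there exists an assignment g : U → V satisfying every constraint (for each i the number of x ∈ S i with g x ∈ B i equals k i) if and only if k i ≤ (S i).card for every i. -/
/-- Satisfiability of cardinality constraints with pairwise disjoint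
selections: a satisfying assignment exists iff each target fits in its
selection. -/
theorem stmt_6 {U V : Type*} [DecidableEq U] [DecidableEq V] (n : ℕ)
    (S : Fin n → Finset U) (B : Fin n → Finset V) (k : Fin n → ℕ)
    (hB : ∀ i, (B i).Nonempty)
    (hdisj : ∀ i j, i ≠ j → S i ∩ S j = ∅)
    (v₀ : V) (hv₀ : ∀ i, v₀ ∉ B i) :
    (∃ g : U → V, ∀ i, ((S i).filter (fun x => g x ∈ B i)).card = k i) ↔
      ∀ i, k i ≤ (S i).card := by
  constructor
  · rintro ⟨g, hg⟩ i
    rw [← hg i]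
    exact Finset.card_le_card (Finset.filter_subset _ _)
  · intro hk
    choose T hTsub hTcard using fun i => Finset.exists_subset_card_eq (hk i)
    classical
    set b : Fin n → V := fun i => (hB i).choose with hb
    refine ⟨fun x => if h : ∃ i, x ∈ T i then b h.choose else v₀, fun i => ?_⟩
    rw [← hTcard i]
    congr 1
    ext x
    simp only [Finset.mem_filter]
    constructor
    · rintro ⟨hxS, hxB⟩
      by_contra hxT
      split_ifs at hxB with h
      · have hji : h.choose = i := by
          by_contra hne
          have := hdisj h.choose i hne
          have hx : x ∈ S h.choose ∩ S i :=
            Finset.mem_inter.mpr ⟨hTsub _ h.choose_spec, hxS⟩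
          simp [this] at hx
        exact hxT (hji ▸ h.choose_spec)
      · exact hv₀ i hxB
    · intro hxT
      have hxS : x ∈ S i := hTsub i hxT
      refine ⟨hxS, ?_⟩
      have h : ∃ j, x ∈ T j := ⟨i, hxT⟩
      rw [dif_pos h]
      have hji : h.choose = i := by
        by_contra hne
        have := hdisj h.choose i hne
        have hx : x ∈ S h.choose ∩ S i :=
          Finset.mem_inter.mpr ⟨hTsub _ h.choose_spec, hxS⟩
        simp [this] at hx
      rw [hji]
      exact (hB i).choose_spec
end

section
/- Let U and V be types, S : Finset U, n ∈ ℕ, and for each i ∈ Fin n a cardinality constraint (S, B i, k i) with the same selection S, where the B i : Finset V are nonempty and pairwise disjoint and k i ∈ ℕ. Assume there is a value v₀ ∈ V with v₀ ∉ B i for every i. Then there exists an assignment g : U → V satisfying every constraint (for each i the number of x ∈ S with g x ∈ B i equals k i) if and only if the sum of the k i over all i ∈ Fin n is at most the cardinality of S. -/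
/-!
Different `B i` are disjoint, so the sets `{x ∈ S | g x ∈ B i}` are disjoint subsets of `S` and
their sizes add up to at most `#S`. Conversely, if `∑ i, k i ≤ #S`, embed `Σ i, Fin (k i)` into
`S` and label the image of the `i`-th summand by `i`; sending an element labelled `i` to a fixed
point of `B i` and every unlabelled element to `v₀` satisfies all the constraints.
-/

open Finset Function

section

variable {U V ι : Type*}

theorem sum_card_filter_mem_le_card [Fintype ι] [DecidableEq U] [DecidableEq V]
    (S : Finset U) (g : U → V) {B : ι → Finset V} (hB : Pairwise (Disjoint on B)) :
    ∑ i, #{x ∈ S | g x ∈ B i} ≤ #S := by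
  have hfibres : ((univ : Finset ι) : Set ι).PairwiseDisjoint fun i => {x ∈ S | g x ∈ B i} :=
    fun _ _ _ _ hij => disjoint_filter.mpr fun _ _ => (Finset.disjoint_left.mp (hB hij) ·)
  rw [← card_biUnion hfibres]
  exact card_le_card (biUnion_subset.mpr fun _ _ => filter_subset _ _)

theorem exists_label_card_filter_eq [Fintype ι] [DecidableEq ι] (S : Finset U) (k : ι → ℕ)
    (hk : ∑ i, k i ≤ #S) : ∃ p : U → Option ι, ∀ i, #{x ∈ S | p x = some i} = k i := by
  obtain ⟨e⟩ : Nonempty ((Σ i, Fin (k i)) ↪ S) :=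
    Embedding.nonempty_of_card_le (by simpa using hk)
  let f : (Σ i, Fin (k i)) ↪ U := e.trans (Embedding.subtype _)
  refine ⟨fun x => (partialInv f x).map Sigma.fst, fun i => ?_⟩
  suffices {x ∈ S | (partialInv f x).map Sigma.fst = some i} =
      univ.map ((Embedding.sigmaMk i).trans f) by
    rw [this, card_map, card_univ, Fintype.card_fin]
  ext x
  simp only [mem_filter, Option.map_eq_some_iff, mem_map, mem_univ, true_and,
    f.injective.isPartialInv _ x]
  constructor
  · rintro ⟨-, ⟨_, j⟩, rfl, rfl⟩
    exact ⟨j, rfl⟩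
  · rintro ⟨j, rfl⟩
    exact ⟨(e ⟨i, j⟩).2, ⟨i, j⟩, rfl, rfl⟩

theorem option_elim_mem_iff_eq_some {B : ι → Finset V} (hB : Pairwise (Disjoint on B)) {b : ι → V}
    (hb : ∀ i, b i ∈ B i) {v₀ : V} (hv₀ : ∀ i, v₀ ∉ B i) (l : Option ι) (i : ι) :
    l.elim v₀ b ∈ B i ↔ l = some i := by
  cases l with
  | none => simpa using hv₀ i
  | some j =>
    simp only [Option.elim_some, Option.some.injEq]
    refine ⟨fun hj => ?_, fun hji => hji ▸ hb j⟩
    by_contra hji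
    exact Finset.disjoint_left.mp (hB hji) (hb j) hj

end

/-- Satisfiability of cardinality constraints with a common selection and
pairwise disjoint value sets: a satisfying assignment exists iff the sum of
the targets fits in the selection. -/
theorem stmt_7 {U V : Type*} [DecidableEq U] [DecidableEq V]
    (S : Finset U) (n : ℕ)
    (B : Fin n → Finset V) (k : Fin n → ℕ)
    (hB : ∀ i, (B i).Nonempty)
    (hdisj : ∀ i j, i ≠ j → B i ∩ B j = ∅)
    (v₀ : V) (hv₀ : ∀ i, v₀ ∉ B i) :
    (∃ g : U → V, ∀ i, (S.filter (fun x => g x ∈ B i)).card = k i) ↔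
      (∑ i : Fin n, k i) ≤ S.card := by
  have hdisjoint : Pairwise (Disjoint on B) := fun i j hij =>
    disjoint_iff_inter_eq_empty.mpr (hdisj i j hij)
  constructor
  · rintro ⟨g, hg⟩
    simpa only [hg] using sum_card_filter_mem_le_card S g hdisjoint
  · intro hk
    obtain ⟨p, hp⟩ := exists_label_card_filter_eq S k hk
    choose b hb using hB
    refine ⟨fun x => (p x).elim v₀ b, fun i => ?_⟩
    simp only [option_elim_mem_iff_eq_some hdisjoint hb hv₀, hp]
end

section
/- Let U be a type, n ∈ ℕ, and S : Fin n → Finset U an injective laminar family, with targets k : Fin n → ℕ. Assume (a) k i ≤ (S i).card for every i, and (b) for every i, the sum of k j over all children j of i is at most k i. Then there exists a family T : Fin n → Finset U such that for every i: T i ⊆ S i and (T i).card = k i; for all i, j, if S j ⊆ S i then T j ⊆ T i; and for all i, j, if S i ∩ S j = ∅ then T i ∩ T j = ∅. -/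
/-- An injective laminar family with targets bounded by the set sizes and
with children targets summing to at most the parent target admits a family
of subsets realizing the targets, respecting containment and disjointness. -/
theorem stmt_8 {U : Type*} [DecidableEq U] (n : ℕ) (S : Fin n → Finset U)
    (hinj : Function.Injective S)
    (hlam : ∀ i j, S i ⊆ S j ∨ S j ⊆ S i ∨ S i ∩ S j = ∅)
    (k : Fin n → ℕ)
    (ha : ∀ i, k i ≤ (S i).card)
    (hb : ∀ i, (∑ j ∈ Finset.univ.filter
        (fun j => S j ⊂ S i ∧ ¬ ∃ l, S j ⊂ S l ∧ S l ⊂ S i), k j) ≤ k i) :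
    ∃ T : Fin n → Finset U,
      (∀ i, T i ⊆ S i ∧ (T i).card = k i) ∧
      (∀ i j, S j ⊆ S i → T j ⊆ T i) ∧
      (∀ i j, S i ∩ S j = ∅ → T i ∩ T j = ∅) := by
  classical
  obtain ⟨M, hM⟩ : ∃ M, ∀ i, (S i).card < M :=
    ⟨(Finset.univ.sup fun i => (S i).card) + 1, fun i =>
      Nat.lt_succ_of_le (Finset.le_sup (f := fun i => (S i).card) (Finset.mem_univ i))⟩
  suffices h : ∀ m, ∃ T : Fin n → Finset U,
      ∀ i, (S i).card < m → T i ⊆ S i ∧ (T i).card = k i ∧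
        ∀ j, S j ⊆ S i → T j ⊆ T i by
    obtain ⟨T, hT⟩ := h M
    refine ⟨T, fun i => ⟨(hT i (hM i)).1, (hT i (hM i)).2.1⟩,
      fun i j hji => (hT i (hM i)).2.2 j hji, fun i j hdisj => ?_⟩
    have : T i ∩ T j ⊆ S i ∩ S j :=
      Finset.inter_subset_inter (hT i (hM i)).1 (hT j (hM j)).1
    rw [hdisj] at this
    exact Finset.subset_empty.mp this
  intro m
  induction m with
  | zero => exact ⟨fun _ => ∅, fun i h => absurd h (by omega)⟩
  | succ m ih =>
    obtain ⟨T, hT⟩ := ih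
    set C : Fin n → Finset (Fin n) := fun i =>
      Finset.univ.filter (fun j => S j ⊂ S i ∧ ¬ ∃ l, S j ⊂ S l ∧ S l ⊂ S i)
      with hC
    have hchildlt : ∀ i, (S i).card = m → ∀ j ∈ C i, (S j).card < m := by
      intro i him j hj
      have := (Finset.mem_filter.mp hj).2.1
      have := Finset.card_lt_card this
      omega
    have key : ∀ i, (S i).card = m →
        ∃ u, ((C i).biUnion T) ⊆ u ∧ u ⊆ S i ∧ u.card = k i := by
      intro i him
      apply Finset.exists_subsuperset_card_eq
      · intro x hx
        obtain ⟨j, hj, hxj⟩ := Finset.mem_biUnion.mp hx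
        exact ((Finset.mem_filter.mp hj).2.1.1)
          ((hT j (hchildlt i him j hj)).1 hxj)
      · calc ((C i).biUnion T).card ≤ ∑ j ∈ C i, (T j).card :=
              Finset.card_biUnion_le
          _ = ∑ j ∈ C i, k j :=
              Finset.sum_congr rfl fun j hj => (hT j (hchildlt i him j hj)).2.1
          _ ≤ k i := hb i
      · exact ha i
    choose u hu1 hu2 hu3 using key
    refine ⟨fun i => if h : (S i).card = m then u i h else T i, fun i hi => ?_⟩
    by_cases him : (S i).card = m
    · simp only [dif_pos him]
      refine ⟨hu2 i him, hu3 i him, fun j hji => ?_⟩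
      by_cases hji' : S j = S i
      · rw [hinj hji']
        simp [him]
      · have hss : S j ⊂ S i := ssubset_of_subset_of_ne hji hji'
        have hjlt : (S j).card < m := by
          have := Finset.card_lt_card hss; omega
        rw [dif_neg (by omega)]
        -- find a maximal c between j and i
        set F : Finset (Fin n) :=
          Finset.univ.filter (fun l => S j ⊆ S l ∧ S l ⊂ S i) with hF
        have hjF : j ∈ F := by simp [hF, hss]
        obtain ⟨c, hcF, hcmax⟩ := Finset.exists_max_image F
          (fun l => (S l).card) ⟨j, hjF⟩
        obtain ⟨hjc, hci⟩ := (Finset.mem_filter.mp hcF).2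
        have hcC : c ∈ C i := by
          refine Finset.mem_filter.mpr ⟨Finset.mem_univ _, hci, ?_⟩
          rintro ⟨l, hcl, hli⟩
          have hlF : l ∈ F := by
            exact Finset.mem_filter.mpr
              ⟨Finset.mem_univ _, hjc.trans hcl.subset, hli⟩
          have := hcmax l hlF
          have := Finset.card_lt_card hcl
          omega
        have hclt : (S c).card < m := hchildlt i him c hcC
        calc T j ⊆ T c := (hT c hclt).2.2 j hjc
          _ ⊆ (C i).biUnion T := Finset.subset_biUnion_of_mem T hcC
          _ ⊆ u i him := hu1 i him
    · have hilt : (S i).card < m := by omega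
      simp only [dif_neg him]
      refine ⟨(hT i hilt).1, (hT i hilt).2.1, fun j hji => ?_⟩
      have : (S j).card < m := lt_of_le_of_lt (Finset.card_le_card hji) hilt
      rw [dif_neg (by omega)]
      exact (hT i hilt).2.2 j hji
end

section
/- Let V be a type, E a set of finite subsets of V each containing at least two elements (hyperedges), π : V → B a partition labeling, S a set of vertices (the skipped vertices), and c : V → K a coloring such that (i) c is injective on S and no vertex outside S has the same color as any vertex in S, (ii) for all u, v ∉ S, c u = c v implies π u = π v, and (iii) for every hyperedge e ∈ E with e ∩ S = ∅ on which π is constant, there exist u, v ∈ e with c u ≠ c v. Then c is a proper coloring of the whole hypergraph: every hyperedge e ∈ E contains two vertices u, v with c u ≠ c v. -/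
/-- Combining partitioned coloring with fresh colors for skipped vertices:
the resulting coloring is proper on the whole hypergraph. -/
theorem stmt_13 {V B K : Type*} (E : Set (Finset V))
    (hE : ∀ e ∈ E, 2 ≤ e.card)
    (π : V → B) (S : Set V) (c : V → K)
    (h1a : Set.InjOn c S)
    (h1b : ∀ u ∉ S, ∀ v ∈ S, c u ≠ c v)
    (h2 : ∀ u ∉ S, ∀ v ∉ S, c u = c v → π u = π v)
    (h3 : ∀ e ∈ E, (↑e ∩ S = (∅ : Set V)) →
      (∀ u ∈ e, ∀ v ∈ e, π u = π v) → ∃ u ∈ e, ∃ v ∈ e, c u ≠ c v) :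
    ∀ e ∈ E, ∃ u ∈ e, ∃ v ∈ e, c u ≠ c v := by
  intro e he
  by_cases hS : (↑e ∩ S : Set V) = ∅
  · by_cases hπ : ∀ u ∈ e, ∀ v ∈ e, π u = π v
    · exact h3 e he hS hπ
    · push_neg at hπ
      obtain ⟨u, hu, v, hv, hne⟩ := hπ
      have hue : u ∉ S := fun h => Set.eq_empty_iff_forall_notMem.mp hS u ⟨hu, h⟩
      have hve : v ∉ S := fun h => Set.eq_empty_iff_forall_notMem.mp hS v ⟨hv, h⟩
      exact ⟨u, hu, v, hv, fun h => hne (h2 u hue v hve h)⟩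
  · obtain ⟨s, hs⟩ := Set.nonempty_iff_ne_empty.mpr hS
    obtain ⟨hse, hsS⟩ := hs
    obtain ⟨t, ht, hts⟩ := Finset.exists_mem_ne (hE e he) s
    by_cases htS : t ∈ S
    · exact ⟨t, ht, s, hse, fun h => hts (h1a htS hsS h)⟩
    · exact ⟨t, ht, s, hse, h1b t htS s hsS⟩
end
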